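/- arXiv:2401.02273 — 5 statements merged into one kernel-verified Lean document; each statement's English description precedes it below -/
import Mathlib

section
/- Let 0 ≤ α < β be real numbers, let f : ℝ → ℝ be nonnegative, and let p = (x₀, y₀) ∈ ℝ² with y₀ ≥ f(x₀). Set r = (y₀ − f(x₀))/(β − α), I = [x₀ − r, x₀ + r], and J = [x₀ − max(r, y₀/β), x₀ + max(r, y₀/β)]. Assume f is α-Lipschitz on J. Define g = max(f, Δ_{p,β}) pointwise. Then: (i) f ≤ g ≤ f + Δ_{(x₀, y₀ − f(x₀)), β−α} pointwise on ℝ; (ii) g(x) = f(x) for every x ∈ ℝ \ I; (iii) g is β-Lipschitz on I. -/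
/-- The triangular "jigsaw" function `Δ_{(a,b),λ}(x) = max(0, b − λ|x − a|)`. -/
def jigDelta (a b lam x : ℝ) : ℝ := max 0 (b - lam * |x - a|)

/-- The jigsaw-adjoining lemma: if `f ≥ 0` is `α`-Lipschitz on a suitable
interval around `x₀`, `y₀ ≥ f x₀` and `α < β`, then `g = max (f, Δ_{(x₀,y₀),β})`
satisfies `f ≤ g ≤ f + Δ_{(x₀, y₀ − f x₀), β−α}`, agrees with `f` off
`I = [x₀ − r, x₀ + r]` where `r = (y₀ − f x₀)/(β − α)`, and is `β`-Lipschitz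
on `I`. -/
theorem jigsaw_adjoin (α β : ℝ) (hα : 0 ≤ α) (hαβ : α < β)
    (f : ℝ → ℝ) (hf : ∀ x, 0 ≤ f x)
    (x₀ y₀ : ℝ) (hy₀ : f x₀ ≤ y₀)
    (r : ℝ) (hr : r = (y₀ - f x₀) / (β - α))
    (hLip : ∀ x ∈ Set.Icc (x₀ - max r (y₀ / β)) (x₀ + max r (y₀ / β)),
            ∀ y ∈ Set.Icc (x₀ - max r (y₀ / β)) (x₀ + max r (y₀ / β)),
            |f x - f y| ≤ α * |x - y|)
    (g : ℝ → ℝ) (hg : ∀ x, g x = max (f x) (jigDelta x₀ y₀ β x)) :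
    (∀ x, f x ≤ g x ∧ g x ≤ f x + jigDelta x₀ (y₀ - f x₀) (β - α) x) ∧
    (∀ x, x ∉ Set.Icc (x₀ - r) (x₀ + r) → g x = f x) ∧
    (∀ x ∈ Set.Icc (x₀ - r) (x₀ + r), ∀ y ∈ Set.Icc (x₀ - r) (x₀ + r),
      |g x - g y| ≤ β * |x - y|) := by
  have hβ : 0 < β := lt_of_le_of_lt hα hαβ
  have hβα : 0 < β - α := by linarith
  have hr0 : 0 ≤ r := by rw [hr]; exact div_nonneg (by linarith) (le_of_lt hβα)
  have hmax0 : 0 ≤ max r (y₀ / β) := le_trans hr0 (le_max_left _ _)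
  have hx₀J : x₀ ∈ Set.Icc (x₀ - max r (y₀ / β)) (x₀ + max r (y₀ / β)) := by
    constructor <;> linarith
  -- if the jig is positive at x, then x ∈ J
  have hinJ : ∀ x : ℝ, 0 < y₀ - β * |x - x₀| →
      x ∈ Set.Icc (x₀ - max r (y₀ / β)) (x₀ + max r (y₀ / β)) := by
    intro x hx
    have h1 : |x - x₀| ≤ y₀ / β := by
      rw [le_div_iff₀ hβ]; nlinarith
    have h2 : |x - x₀| ≤ max r (y₀ / β) := le_trans h1 (le_max_right _ _)
    rw [abs_le] at h2
    constructor <;> linarith [h2.1, h2.2]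
  refine ⟨?_, ?_, ?_⟩
  · intro x
    rw [hg]
    refine ⟨le_max_left _ _, max_le ?_ ?_⟩
    · have : (0:ℝ) ≤ jigDelta x₀ (y₀ - f x₀) (β - α) x := le_max_left _ _
      linarith
    · unfold jigDelta
      rcases le_or_gt (y₀ - β * |x - x₀|) 0 with h | h
      · have h1 : max 0 (y₀ - β * |x - x₀|) = 0 := max_eq_left h
        rw [h1]
        have := hf x
        have : (0:ℝ) ≤ max 0 (y₀ - f x₀ - (β - α) * |x - x₀|) := le_max_left _ _
        linarith [hf x]
      · have hJ := hinJ x h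
        have hfx := hLip x₀ hx₀J x hJ
        have habs : |x₀ - x| = |x - x₀| := abs_sub_comm _ _
        rw [habs] at hfx
        have h2 : f x₀ - α * |x - x₀| ≤ f x := by
          have := abs_le.mp hfx
          linarith [this.1]
        have h3 : y₀ - β * |x - x₀| ≤ f x + (y₀ - f x₀ - (β - α) * |x - x₀|) := by
          linarith
        refine max_le ?_ (le_trans h3 (by
          gcongr; exact le_max_right _ _))
        have := hf x
        have : (0:ℝ) ≤ max 0 (y₀ - f x₀ - (β - α) * |x - x₀|) := le_max_left _ _
        linarith [hf x]
  · intro x hx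
    rw [hg]
    unfold jigDelta
    rcases le_or_gt (y₀ - β * |x - x₀|) 0 with h | h
    · rw [max_eq_left h]
      exact max_eq_left (hf x)
    · have hJ := hinJ x h
      have hfx := hLip x₀ hx₀J x hJ
      rw [abs_sub_comm x₀ x] at hfx
      have h2 : f x₀ - α * |x - x₀| ≤ f x := by
        have := abs_le.mp hfx; linarith [this.1]
      have hrabs : r < |x - x₀| := by
        simp only [Set.mem_Icc, not_and_or, not_le] at hx
        rcases hx with hx | hx
        · have h5 : r < x₀ - x := by linarith
          calc r < x₀ - x := h5
            _ ≤ |x₀ - x| := le_abs_self _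
            _ = |x - x₀| := abs_sub_comm _ _
        · calc r < x - x₀ := by linarith
            _ ≤ |x - x₀| := le_abs_self _
      have heq : y₀ - f x₀ = (β - α) * r := by
        rw [hr]; field_simp
      apply max_eq_left
      apply max_le (hf x)
      nlinarith [mul_pos hβα (by linarith : (0:ℝ) < |x - x₀| - r)]
  · intro x hx y hy
    have hsub : Set.Icc (x₀ - r) (x₀ + r) ⊆
        Set.Icc (x₀ - max r (y₀ / β)) (x₀ + max r (y₀ / β)) := by
      apply Set.Icc_subset_Icc <;> simp [le_max_left] <;> linarith [le_max_left r (y₀/β)]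
    have hfl := hLip x (hsub hx) y (hsub hy)
    have hΔ : |jigDelta x₀ y₀ β x - jigDelta x₀ y₀ β y| ≤ β * |x - y| := by
      unfold jigDelta
      refine le_trans (abs_max_sub_max_le_max _ _ _ _) (max_le ?_ ?_)
      · simp; positivity
      · have h1 : (y₀ - β * |x - x₀|) - (y₀ - β * |y - x₀|) = β * (|y - x₀| - |x - x₀|) := by
          ring
        rw [h1, abs_mul, abs_of_pos hβ]
        refine mul_le_mul_of_nonneg_left ?_ hβ.le
        calc |(|y - x₀| - |x - x₀|)| ≤ |y - x₀ - (x - x₀)| := abs_abs_sub_abs_le_abs_sub _ _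
          _ = |y - x| := by ring_nf
          _ = |x - y| := abs_sub_comm _ _
    rw [hg, hg]
    refine le_trans (abs_max_sub_max_le_max _ _ _ _) (max_le ?_ hΔ)
    calc |f x - f y| ≤ α * |x - y| := hfl
    _ ≤ β * |x - y| := mul_le_mul_of_nonneg_right hαβ.le (abs_nonneg _)
end

section
/- Let r > 0 and let D, D' ⊆ ℝ² be closed disks of radius r with centers c, c' satisfying ‖c − c'‖ ≥ r/2. Let B be a rectangle of dimensions w × h with w = (9/10)r and h ≤ w/1000 that is almost radial relative to D with orientation u, and let B' be a rectangle of the same dimensions almost radial relative to D' with the same orientation u. Let B^{(1)},…,B^{(1000)} and (B')^{(1)},…,(B')^{(1000)} be their sections, numbered by increasing distance from c and from c' respectively. Then for every i ∈ {1,…,1000}, the Euclidean distance between B^{(i)} and (B')^{(i)} is greater than r/4. -/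
/-- The Euclidean plane. -/
abbrev E2 := EuclideanSpace ℝ (Fin 2)

/-- Counterclockwise rotation of `u` by a right angle (a perpendicular vector). -/
noncomputable def perp (u : E2) : E2 :=
  (WithLp.equiv 2 (Fin 2 → ℝ)).symm ![-u 1, u 0]

/-- The rectangle with corner `q`, orientation `u` (with perpendicular `perp u`)
and dimensions `w × h`: `q + {s u + t (perp u) : 0 ≤ s ≤ w, 0 ≤ t ≤ h}`. -/
def orect (q u : E2) (w h : ℝ) : Set E2 :=
  {p | ∃ s t : ℝ, 0 ≤ s ∧ s ≤ w ∧ 0 ≤ t ∧ t ≤ h ∧ p = q + s • u + t • perp u}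

/-- The two long sides of the rectangle `orect q u w h` (the sides parallel to `u`). -/
def longSideBot (q u : E2) (w : ℝ) : Set E2 :=
  {p | ∃ s : ℝ, 0 ≤ s ∧ s ≤ w ∧ p = q + s • u}

def longSideTop (q u : E2) (w h : ℝ) : Set E2 :=
  {p | ∃ s : ℝ, 0 ≤ s ∧ s ≤ w ∧ p = q + h • perp u + s • u}

/-- The rectangle `orect q u w h` is almost radial relative to the disk of
center `c` and radius `r`: it is contained in the disk, touches its boundary,
its long sides have length `≤ r`, and the rays extending the long sides in
direction `u` pass within `r/100` of `c`. -/
def AlmostRadial (c : E2) (r : ℝ) (q u : E2) (w h : ℝ) : Prop :=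
  orect q u w h ⊆ Metric.closedBall c r ∧
  (orect q u w h ∩ Metric.sphere c r).Nonempty ∧
  w ≤ r ∧
  (∃ s : ℝ, 0 ≤ s ∧ dist (q + s • u) c ≤ r / 100) ∧
  (∃ s : ℝ, 0 ≤ s ∧ dist (q + h • perp u + s • u) c ≤ r / 100)

/-- The `j`-th section (in the natural order along `u`, `j = 0, …, 999`) of the
rectangle `orect q u w h`: the sub-rectangle with `s ∈ [j·w/1000, (j+1)·w/1000]`. -/
def rawSection (q u : E2) (w h : ℝ) (j : Fin 1000) : Set E2 :=
  {p | ∃ s t : ℝ, (j : ℝ) * w / 1000 ≤ s ∧ s ≤ ((j : ℝ) + 1) * w / 1000 ∧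
    0 ≤ t ∧ t ≤ h ∧ p = q + s • u + t • perp u}

lemma unit_sq {u : E2} (hu : ‖u‖ = 1) : u 0 ^ 2 + u 1 ^ 2 = 1 := by
  have h := EuclideanSpace.norm_eq u
  rw [hu] at h
  have h2 : (∑ i, ‖u i‖ ^ 2) = 1 := Real.sqrt_eq_one.mp h.symm
  simpa [Fin.sum_univ_two, sq_abs] using h2

lemma norm_comb {u : E2} (hu : ‖u‖ = 1) (α β : ℝ) :
    ‖α • u + β • perp u‖ = Real.sqrt (α ^ 2 + β ^ 2) := by
  have h2 := unit_sq hu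
  rw [EuclideanSpace.norm_eq]
  congr 1
  simp only [Fin.sum_univ_two, PiLp.add_apply, PiLp.smul_apply, smul_eq_mul,
    Real.norm_eq_abs, sq_abs]
  have h0 : perp u 0 = -u 1 := rfl
  have h1 : perp u 1 = u 0 := rfl
  rw [h0, h1]
  ring_nf
  linear_combination (α ^ 2 + β ^ 2) * h2


noncomputable def Acoef (c q u : E2) : ℝ := (c 0 - q 0) * u 0 + (c 1 - q 1) * u 1
noncomputable def Bcoef (c q u : E2) : ℝ := -(c 0 - q 0) * u 1 + (c 1 - q 1) * u 0


lemma decomp (c q u : E2) (hu : ‖u‖ = 1) (s t : ℝ) :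
    q + s • u + t • perp u =
      c + (s - Acoef c q u) • u + (t - Bcoef c q u) • perp u := by
  have h2 := unit_sq hu
  have h0 : perp u 0 = -u 1 := rfl
  have h1 : perp u 1 = u 0 := rfl
  ext i
  fin_cases i <;>
    simp only [Fin.mk_zero, Fin.mk_one, PiLp.add_apply, PiLp.smul_apply, smul_eq_mul, h0, h1, Acoef, Bcoef] <;>
    ring_nf
  · linear_combination (c 0 - q 0) * h2
  · linear_combination (c 1 - q 1) * h2

lemma dist_formula (c q u : E2) (hu : ‖u‖ = 1) (s t : ℝ) :
    dist (q + s • u + t • perp u) c =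
      Real.sqrt ((s - Acoef c q u) ^ 2 + (t - Bcoef c q u) ^ 2) := by
  rw [decomp c q u hu s t, dist_eq_norm]
  rw [show c + (s - Acoef c q u) • u + (t - Bcoef c q u) • perp u - c
      = (s - Acoef c q u) • u + (t - Bcoef c q u) • perp u by abel]
  exact norm_comb hu _ _

lemma sqrt_le_imp {x y : ℝ} (hy : 0 ≤ y) (h : Real.sqrt x ≤ y) (hx : 0 ≤ x) : x ≤ y ^ 2 := by
  nlinarith [Real.sq_sqrt hx, Real.sqrt_nonneg x]

set_option maxHeartbeats 1000000 in
lemma radial_bounds {c q u : E2} {r w h : ℝ} (hr : 0 < r) (hw : w = (9/10) * r)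
    (hh : 0 < h) (hhw : h ≤ w / 1000) (hu : ‖u‖ = 1)
    (hB : AlmostRadial c r q u w h) :
    r - h - r / 100 ≤ Acoef c q u ∧ Acoef c q u ≤ r ∧ (Bcoef c q u) ^ 2 ≤ (r / 100) ^ 2 := by
  obtain ⟨hball, ⟨p, ⟨⟨s, t, hs0, hsw, ht0, hth, rfl⟩, hsph⟩⟩, -, ⟨s0, hs00, hray⟩, -⟩ := hB
  set A := Acoef c q u with hA
  set Bb := Bcoef c q u with hBb
  have hw0 : 0 < w := by rw [hw]; linarith
  -- ray condition
  have hray2 : (s0 - A) ^ 2 + Bb ^ 2 ≤ (r / 100) ^ 2 := by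
    have : dist (q + s0 • u + (0:ℝ) • perp u) c ≤ r / 100 := by
      simpa using hray
    rw [dist_formula c q u hu] at this
    have := sqrt_le_imp (by linarith) this (by positivity)
    nlinarith [this]
  have hBsq : Bb ^ 2 ≤ (r / 100) ^ 2 := by nlinarith [sq_nonneg (s0 - A)]
  -- q in ball
  have hq : dist (q + (0:ℝ) • u + (0:ℝ) • perp u) c ≤ r := by
    have : (q + (0:ℝ) • u + (0:ℝ) • perp u) ∈ Metric.closedBall c r := by
      apply hball
      exact ⟨0, 0, le_refl 0, le_of_lt hw0, le_refl 0, hh.le, rfl⟩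
    simpa [Metric.mem_closedBall] using this
  have hq2 : A ^ 2 + Bb ^ 2 ≤ r ^ 2 := by
    rw [dist_formula c q u hu] at hq
    have := sqrt_le_imp hr.le hq (by positivity)
    nlinarith [this]
  have hAr : A ≤ r := by nlinarith [sq_nonneg Bb, sq_nonneg (A - r), sq_nonneg (A + r)]
  -- sphere touching point
  have hsph2 : (s - A) ^ 2 + (t - Bb) ^ 2 = r ^ 2 := by
    have : dist (q + s • u + t • perp u) c = r := hsph
    rw [dist_formula c q u hu] at this
    have h1 : (s - A) ^ 2 + (t - Bb) ^ 2 = (Real.sqrt ((s - A) ^ 2 + (t - Bb) ^ 2)) ^ 2 :=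
      (Real.sq_sqrt (by positivity)).symm
    rw [h1, this]
  have hBabs : |Bb| ≤ r / 100 := by
    rw [abs_le]; constructor <;> nlinarith
  have htB : (t - Bb) ^ 2 ≤ (h + r / 100) ^ 2 := by
    rw [abs_le] at hBabs
    exact sq_le_sq' (by linarith) (by linarith)
  have hpos : h + r / 100 ≤ r := by rw [hw] at hhw; linarith
  have hsA : (s - A) ^ 2 ≥ (r - h - r / 100) ^ 2 := by nlinarith [htB, hsph2, hpos, hr.le]
  -- A ≥ s0 - r/100 ≥ -r/100
  have hAge : A ≥ s0 - r / 100 := by nlinarith [sq_nonneg Bb, sq_nonneg (s0 - A + r/100)]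
  -- case: s - A large positive impossible
  have key : A - s ≥ r - h - r / 100 := by
    rcases le_or_gt (A - s) 0 with hc | hc
    · exfalso
      have h1 : s - A ≥ r - h - r / 100 := by nlinarith [sq_nonneg (s - A - (r - h - r/100)), sq_nonneg (s - A + (r - h - r/100))]
      rw [hw] at hsw hhw
      linarith
    · nlinarith [sq_nonneg (A - s - (r - h - r/100)), sq_nonneg (A - s + (r - h - r/100))]
  refine ⟨by linarith, hAr, hBsq⟩

lemma tstar_min {Bb h : ℝ} (hh : 0 ≤ h) {t : ℝ} (ht0 : 0 ≤ t) (hth : t ≤ h) :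
    (max 0 (min Bb h) - Bb) ^ 2 ≤ (t - Bb) ^ 2 := by
  rcases le_total Bb 0 with hB | hB
  · rw [min_eq_left (hB.trans hh), max_eq_left hB]
    nlinarith
  · rcases le_total Bb h with hBh | hBh
    · rw [min_eq_left hBh, max_eq_right hB]
      nlinarith
    · rw [min_eq_right hBh, max_eq_right hh]
      nlinarith

set_option maxHeartbeats 1000000 in
lemma infDist_strictAnti {c q u : E2} {r w h : ℝ} (hr : 0 < r) (hw : w = (9/10) * r)
    (hh : 0 < h) (hhw : h ≤ w / 1000) (hu : ‖u‖ = 1)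
    (hB : AlmostRadial c r q u w h) :
    ∀ j1 j2 : Fin 1000, j1 < j2 →
      Metric.infDist c (rawSection q u w h j2) < Metric.infDist c (rawSection q u w h j1) := by
  obtain ⟨hA1, hA2, hBsq⟩ := radial_bounds hr hw hh hhw hu hB
  set A := Acoef c q u
  set Bb := Bcoef c q u
  set tst := max 0 (min Bb h) with htst
  have hw0 : 0 < w := by rw [hw]; linarith
  have htst0 : 0 ≤ tst := le_max_left _ _
  have htsth : tst ≤ h := max_le hh.le (min_le_right _ _)
  have hAw : w < A := by
    rw [hw] at hhw ⊢; nlinarith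
  -- for each j : the exact infDist value
  have hval : ∀ j : Fin 1000,
      Metric.infDist c (rawSection q u w h j)
        = Real.sqrt ((A - ((j : ℝ) + 1) * w / 1000) ^ 2 + (tst - Bb) ^ 2) := by
    intro j
    have hj1000 : ((j : ℝ) + 1) ≤ 1000 := by
      have := j.is_lt
      have : ((j : ℕ) : ℝ) ≤ 999 := by exact_mod_cast Nat.lt_succ_iff.mp this
      linarith
    have hjw : ((j : ℝ) + 1) * w / 1000 ≤ w := by nlinarith
    have hmem : (q + (((j : ℝ) + 1) * w / 1000) • u + tst • perp u) ∈ rawSection q u w h j :=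
      ⟨((j : ℝ) + 1) * w / 1000, tst, by nlinarith, le_refl _, htst0, htsth, rfl⟩
    apply le_antisymm
    · have := Metric.infDist_le_dist_of_mem (x := c) hmem
      rw [dist_comm, dist_formula c q u hu] at this
      refine le_of_le_of_eq this ?_
      congr 1
      ring
    · rw [Metric.infDist_eq_iInf]
      have : Nonempty (rawSection q u w h j) := ⟨_, hmem⟩
      apply le_ciInf
      rintro ⟨y, s, t, hs1, hs2, ht1, ht2, rfl⟩
      rw [dist_comm, dist_formula c q u hu]
      apply Real.sqrt_le_sqrt
      have h1 : (tst - Bb) ^ 2 ≤ (t - Bb) ^ 2 := tstar_min hh.le ht1 ht2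
      have hsw : s ≤ w := hs2.trans hjw
      have h2 : (A - ((j : ℝ) + 1) * w / 1000) ^ 2 ≤ (s - A) ^ 2 := by nlinarith
      linarith
  intro j1 j2 hlt
  rw [hval j1, hval j2]
  apply Real.sqrt_lt_sqrt (by positivity)
  have hj2w : ((j2 : ℝ) + 1) * w / 1000 ≤ w := by
    have := j2.is_lt
    have : ((j2 : ℕ) : ℝ) ≤ 999 := by exact_mod_cast Nat.lt_succ_iff.mp this
    nlinarith
  have hlt' : ((j1 : ℝ)) < (j2 : ℝ) := by exact_mod_cast hlt
  have hb : ((j1 : ℝ) + 1) * w / 1000 < ((j2 : ℝ) + 1) * w / 1000 := by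
    nlinarith [mul_pos (sub_pos.mpr hlt') hw0]
  have hpos2 : (0:ℝ) ≤ A - ((j2 : ℝ) + 1) * w / 1000 := by linarith
  have h3 : (A - ((j2 : ℝ) + 1) * w / 1000) ^ 2 < (A - ((j1 : ℝ) + 1) * w / 1000) ^ 2 := by
    nlinarith [hb, hpos2]
  linarith

lemma perm_rev {g : Fin 1000 → ℝ}
    (hg : ∀ j1 j2 : Fin 1000, j1 < j2 → g j2 < g j1)
    (π : Equiv.Perm (Fin 1000))
    (hπ : ∀ i j : Fin 1000, i ≤ j → g (π i) ≤ g (π j)) (i : Fin 1000) : π i = i.rev := by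
  have hanti : ∀ a b : Fin 1000, a < b → π b < π a := by
    intro a b hab
    rcases lt_trichotomy (π a) (π b) with h | h | h
    · exact absurd (hπ a b hab.le) (not_le.mpr (hg _ _ h))
    · exact absurd (π.injective h) (Fin.ne_of_lt hab)
    · exact h
  set σ : Equiv.Perm (Fin 1000) := π.trans (Fin.revPerm) with hσ
  have hmono : StrictMono σ := fun a b hab => by
    simp only [hσ, Equiv.trans_apply, Fin.revPerm_apply]
    exact Fin.rev_lt_rev.mpr (hanti a b hab)
  have hmono' : StrictMono σ.symm := fun a b hab => by
    rcases lt_trichotomy (σ.symm a) (σ.symm b) with h | h | h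
    · exact h
    · exact absurd (σ.symm.injective h) (Fin.ne_of_lt hab)
    · have := hmono h
      simp only [Equiv.apply_symm_apply] at this
      exact absurd this (not_lt.mpr hab.le)
  have inst : WellFoundedLT (Fin 1000) := inferInstance
  have h1 : σ i ≤ σ.symm (σ i) := @StrictMono.le_apply _ _ inst _ hmono' _
  rw [Equiv.symm_apply_apply] at h1
  have h2 : i ≤ σ i := @StrictMono.le_apply _ _ inst _ hmono _
  have h3 : σ i = i := le_antisymm h1 h2
  have : (π i).rev = i := by
    simpa [hσ, Equiv.trans_apply] using h3
  have h4 := congrArg Fin.rev this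
  rwa [Fin.rev_rev] at h4


set_option maxHeartbeats 2000000 in
/-- If `B, B'` are almost radial rectangles of dimensions `(9/10)r × h`
(`h ≤ w/1000`), with the same orientation `u`, relative to disks of radius `r`
whose centers are at least `r/2` apart, then for each `i` the `i`-th sections
(both numbered by increasing distance from the respective centers) are more
than `r/4` apart. -/
theorem sections_far_apart
    (r : ℝ) (hr : 0 < r) (c c' : E2) (hcc : r / 2 ≤ dist c c')
    (w h : ℝ) (hw : w = (9 / 10) * r) (hh : 0 < h) (hhw : h ≤ w / 1000)
    (q q' u : E2) (hu : ‖u‖ = 1)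
    (hB : AlmostRadial c r q u w h) (hB' : AlmostRadial c' r q' u w h)
    (π π' : Equiv.Perm (Fin 1000))
    (hπ : ∀ i j : Fin 1000, i ≤ j →
      Metric.infDist c (rawSection q u w h (π i)) ≤
        Metric.infDist c (rawSection q u w h (π j)))
    (hπ' : ∀ i j : Fin 1000, i ≤ j →
      Metric.infDist c' (rawSection q' u w h (π' i)) ≤
        Metric.infDist c' (rawSection q' u w h (π' j))) :
    ∀ i : Fin 1000, ∀ p ∈ rawSection q u w h (π i),
      ∀ p' ∈ rawSection q' u w h (π' i), dist p p' > r / 4 := by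
  have hg := infDist_strictAnti hr hw hh hhw hu hB
  have hg' := infDist_strictAnti hr hw hh hhw hu hB'
  intro i p hp p' hp'
  rw [perm_rev hg π hπ i] at hp
  rw [perm_rev hg' π' hπ' i] at hp'
  obtain ⟨hA1, hA2, hBsq⟩ := radial_bounds hr hw hh hhw hu hB
  obtain ⟨hA1', hA2', hBsq'⟩ := radial_bounds hr hw hh hhw hu hB'
  obtain ⟨s, t, hs1, hs2, ht1, ht2, rfl⟩ := hp
  obtain ⟨s', t', hs1', hs2', ht1', ht2', rfl⟩ := hp'
  set A := Acoef c q u with hA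
  set Bb := Bcoef c q u with hBb
  set A' := Acoef c' q' u with hA'
  set Bb' := Bcoef c' q' u with hBb'
  set al := (s - A) - (s' - A') with hal
  set be := (t - Bb) - (t' - Bb') with hbe
  have hw0 : 0 < w := by rw [hw]; linarith
  have hperpnorm : ‖perp u‖ = 1 := by
    have := norm_comb hu 0 1
    simpa using this
  have hcomb : ‖al • u + be • perp u‖ ≤ |al| + |be| :=
    calc ‖al • u + be • perp u‖ ≤ ‖al • u‖ + ‖be • perp u‖ := norm_add_le _ _
    _ = |al| + |be| := by
        rw [norm_smul, norm_smul, hu, hperpnorm, Real.norm_eq_abs, Real.norm_eq_abs]; ring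
  have hvec : (q + s • u + t • perp u) - (q' + s' • u + t' • perp u)
      = (c - c') + (al • u + be • perp u) := by
    rw [decomp c q u hu s t, decomp c' q' u hu s' t', hal, hbe]
    rw [← hA, ← hBb, ← hA', ← hBb']
    module
  have h1 : dist c c' ≤ dist (q + s • u + t • perp u) (q' + s' • u + t' • perp u)
      + (|al| + |be|) := by
    rw [dist_eq_norm, dist_eq_norm]
    have e1 : c - c' = ((q + s • u + t • perp u) - (q' + s' • u + t' • perp u))
        - (al • u + be • perp u) := by rw [hvec]; abel
    calc ‖c - c'‖ = ‖((q + s • u + t • perp u) - (q' + s' • u + t' • perp u))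
          - (al • u + be • perp u)‖ := by rw [← e1]
    _ ≤ ‖(q + s • u + t • perp u) - (q' + s' • u + t' • perp u)‖
          + ‖al • u + be • perp u‖ := norm_sub_le _ _
    _ ≤ _ := by linarith [hcomb]
  have hBbabs : |Bb| ≤ r / 100 := by
    rw [abs_le]; constructor <;> nlinarith [hBsq, sq_nonneg (Bb - r/100), sq_nonneg (Bb + r/100)]
  have hBbabs' : |Bb'| ≤ r / 100 := by
    rw [abs_le]; constructor <;> nlinarith [hBsq', sq_nonneg (Bb' - r/100), sq_nonneg (Bb' + r/100)]
  have es : (((i.rev) : ℝ) + 1) * w / 1000 = ((i.rev) : ℝ) * w / 1000 + w / 1000 := by ring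
  have hss : |s - s'| ≤ w / 1000 := by
    rw [abs_le]; constructor <;> linarith [hs1, hs2, hs1', hs2', es]
  have halpha : |al| ≤ w / 1000 + (h + r / 100) := by
    rw [abs_le] at hss ⊢
    constructor <;> linarith [hss.1, hss.2, hA1, hA2, hA1', hA2']
  have hbeta : |be| ≤ h + r / 50 := by
    rw [abs_le] at hBbabs hBbabs' ⊢
    constructor <;> linarith
  have hhr : h ≤ (9/10) * r / 1000 := by rw [hw] at hhw; linarith
  rw [hw] at halpha
  have := abs_nonneg al
  linarith [h1, hcc, halpha, hbeta]
end

section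
/- Let A be a nonempty finite alphabet, X ⊆ A^{ℤ²} a subshift, and g ≥ 8 a real number. Suppose X admits gluing along every pair (E,F) of finite subsets of ℤ² satisfying: (C1) d(E,F) > g/2 − 2; (C3) any two distinct connected components of E are at Euclidean distance ≥ g/2 − 2 from each other, and the same holds for F. Then X admits gluing along every pair (E,F) of finite subsets of ℤ² with d(E,F) > g. -/
/-- Euclidean distance between two sites of `ℤ²`. -/
noncomputable def edistZ2 (u v : ℤ × ℤ) : ℝ :=
  Real.sqrt (((u.1 - v.1 : ℤ) : ℝ) ^ 2 + ((u.2 - v.2 : ℤ) : ℝ) ^ 2)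

/-- The shift `ℤ²`-action on the full shift: `(σ_v x)_u = x_{u+v}`. -/
def shiftZ2 {A : Type*} (v : ℤ × ℤ) (x : ℤ × ℤ → A) : ℤ × ℤ → A :=
  fun u => x (u + v)

/-- The product topology on the full shift `A^{ℤ²}`, with `A` discrete. -/
def fullShiftTopZ2 (A : Type*) : TopologicalSpace (ℤ × ℤ → A) :=
  @Pi.topologicalSpace (ℤ × ℤ) (fun _ => A) (fun _ => ⊥)

/-- `X` admits gluing along the pair `(E, F)`. -/
def AdmitsGluing {A : Type*} (X : Set (ℤ × ℤ → A)) (E F : Set (ℤ × ℤ)) : Prop :=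
  ∀ x ∈ X, ∀ y ∈ X, ∃ z ∈ X, (∀ u ∈ E, z u = x u) ∧ (∀ u ∈ F, z u = y u)

/-- Adjacency in the grid graph on `ℤ²`: `ℓ¹`-distance one. -/
def adjZ2 (u v : ℤ × ℤ) : Prop :=
  (u.1 - v.1).natAbs + (u.2 - v.2).natAbs = 1

/-- `b` is reachable from `a` inside `S` along grid edges. -/
def ReachIn (S : Set (ℤ × ℤ)) (a b : ℤ × ℤ) : Prop :=
  Relation.ReflTransGen (fun p q => p ∈ S ∧ q ∈ S ∧ adjZ2 p q) a b

/-- `S` is connected in the grid graph on `ℤ²`. -/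
def ConnIn (S : Set (ℤ × ℤ)) : Prop :=
  ∀ a ∈ S, ∀ b ∈ S, ReachIn S a b

/-- Any two distinct connected components of `S` are at Euclidean distance
`≥ δ`: equivalently, any two points of `S` not reachable from one another
within `S` are at distance `≥ δ`. -/
def ComponentsSeparated (S : Set (ℤ × ℤ)) (δ : ℝ) : Prop :=
  ∀ a ∈ S, ∀ b ∈ S, ¬ ReachIn S a b → edistZ2 a b ≥ δ

/-!
Fatten a finite set `W` by joining any two of its points at distance `≤ g` by a lattice
staircase that stays within `9/8` of the segment between them. Two points of the fattened set
that are not connected in it lie on staircases over segments `[a, b]` and `[c, d]` of length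
`≤ g` whose four cross distances exceed `g`. By the identity
`‖(1 - t) u + t v‖² = (1 - t) ‖u‖² + t ‖v‖² - t (1 - t) ‖u - v‖²`, every point of `[a, b]` is
then at distance `≥ (√3/2) g` from `c` and `d`, and the two segments are `≥ g/√2` apart. So the
fattened sets satisfy the separation hypotheses for `g/2 - 2`, and gluing along them restricts
to gluing along the original sets.
-/

section InnerProductSpace

variable {E : Type*} [NormedAddCommGroup E] [InnerProductSpace ℝ E]

theorem norm_smul_add_smul_sq {a b : ℝ} (hab : a + b = 1) (x y : E) :
    ‖a • x + b • y‖ ^ 2 = a * ‖x‖ ^ 2 + b * ‖y‖ ^ 2 - a * b * ‖x - y‖ ^ 2 := by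
  rw [norm_add_sq_real, norm_sub_sq_real, norm_smul, norm_smul, real_inner_smul_left,
    real_inner_smul_right, mul_pow, mul_pow, Real.norm_eq_abs, Real.norm_eq_abs, sq_abs, sq_abs]
  obtain rfl := eq_sub_of_add_eq hab
  ring

theorem le_dist_sq_of_mem_segment {x y z c : E} {K M : ℝ} (hz : z ∈ segment ℝ x y)
    (hx : K ≤ dist c x ^ 2) (hy : K ≤ dist c y ^ 2) (hxy : dist x y ^ 2 ≤ M) :
    K - M / 4 ≤ dist c z ^ 2 := by
  obtain ⟨a, b, ha, hb, hab, rfl⟩ := hz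
  have hc : c - (a • x + b • y) = a • (c - x) + b • (c - y) := by
    calc c - (a • x + b • y) = (a + b) • c - (a • x + b • y) := by rw [hab, one_smul]
      _ = a • (c - x) + b • (c - y) := by simp only [add_smul, smul_sub]; abel
  rw [dist_eq_norm, hc, norm_smul_add_smul_sq hab, sub_sub_sub_cancel_left, ← dist_eq_norm,
    ← dist_eq_norm, ← dist_eq_norm, dist_comm y x]
  have hab4 : a * b ≤ 1 / 4 := by nlinarith [sq_nonneg (a - b)]
  have hM : a * b * dist x y ^ 2 ≤ M / 4 := by
    nlinarith [mul_le_mul_of_nonneg_right hab4 (sq_nonneg (dist x y))]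
  nlinarith [mul_le_mul_of_nonneg_left hx ha, mul_le_mul_of_nonneg_left hy hb]

theorem half_sq_le_dist_sq_of_mem_segment {a b c d z w : E} {g : ℝ}
    (hab : dist a b ≤ g) (hcd : dist c d ≤ g)
    (hac : g ≤ dist a c) (had : g ≤ dist a d) (hbc : g ≤ dist b c) (hbd : g ≤ dist b d)
    (hz : z ∈ segment ℝ a b) (hw : w ∈ segment ℝ c d) :
    g ^ 2 / 2 ≤ dist z w ^ 2 := by
  have sq_le {r s : ℝ} (h0 : 0 ≤ r) (h : r ≤ s) : r ^ 2 ≤ s ^ 2 := pow_le_pow_left₀ h0 h 2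
  have hg : 0 ≤ g := dist_nonneg.trans hab
  have hcz := le_dist_sq_of_mem_segment hz (sq_le hg (dist_comm a c ▸ hac))
    (sq_le hg (dist_comm b c ▸ hbc)) (sq_le dist_nonneg hab)
  have hdz := le_dist_sq_of_mem_segment hz (sq_le hg (dist_comm a d ▸ had))
    (sq_le hg (dist_comm b d ▸ hbd)) (sq_le dist_nonneg hab)
  have := le_dist_sq_of_mem_segment hw (dist_comm z c ▸ hcz) (dist_comm z d ▸ hdz)
    (sq_le dist_nonneg hcd)
  linarith

end InnerProductSpace

theorem abs_round_sub_round_le_one {α : Type*} [Field α] [LinearOrder α]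
    [IsStrictOrderedRing α] [FloorRing α] {x y : α} (h : |x - y| < 1) :
    |round x - round y| ≤ 1 := by
  have hx := abs_sub_round x
  have hy := abs_sub_round y
  rw [abs_le] at hx hy ⊢
  rw [abs_lt] at h
  have hlt : ((round x - round y : ℤ) : α) < 2 := by push_cast; linarith
  have hgt : (-2 : α) < ((round x - round y : ℤ) : α) := by push_cast; linarith
  have hlt' : round x - round y < 2 := by exact_mod_cast hlt
  have hgt' : -2 < round x - round y := by exact_mod_cast hgt
  constructor <;> omega

def toComplex (u : ℤ × ℤ) : ℂ := ⟨u.1, u.2⟩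

@[simp] theorem toComplex_re (u : ℤ × ℤ) : (toComplex u).re = u.1 := rfl

@[simp] theorem toComplex_im (u : ℤ × ℤ) : (toComplex u).im = u.2 := rfl

theorem edistZ2_eq_dist (u v : ℤ × ℤ) : edistZ2 u v = dist (toComplex u) (toComplex v) := by
  rw [Complex.dist_eq_re_im, edistZ2]
  push_cast
  rfl

theorem adjZ2_comm {u v : ℤ × ℤ} (h : adjZ2 u v) : adjZ2 v u := by
  unfold adjZ2 at *
  omega

theorem ReachIn.symm {S : Set (ℤ × ℤ)} {u v : ℤ × ℤ} (h : ReachIn S u v) : ReachIn S v u :=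
  Relation.reflTransGen_swap.1 <|
    Relation.ReflTransGen.mono (fun _ _ h => ⟨h.2.1, h.1, adjZ2_comm h.2.2⟩) u v h

theorem ReachIn.trans {S : Set (ℤ × ℤ)} {u v w : ℤ × ℤ} (huv : ReachIn S u v)
    (hvw : ReachIn S v w) : ReachIn S u w :=
  Relation.ReflTransGen.trans huv hvw

theorem ReachIn.mono {S T : Set (ℤ × ℤ)} (hST : S ⊆ T) {u v : ℤ × ℤ} (h : ReachIn S u v) :
    ReachIn T u v :=
  Relation.ReflTransGen.mono (fun _ _ h => ⟨hST h.1, hST h.2.1, h.2.2⟩) u v h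

theorem reachIn_of_natAbs_add_natAbs_le_one {S : Set (ℤ × ℤ)} {u v : ℤ × ℤ} (hu : u ∈ S)
    (hv : v ∈ S) (h : (v.1 - u.1).natAbs + (v.2 - u.2).natAbs ≤ 1) : ReachIn S u v := by
  by_cases huv : u = v
  · exact huv ▸ Relation.ReflTransGen.refl
  · refine Relation.ReflTransGen.single ⟨hu, hv, ?_⟩
    have : u.1 ≠ v.1 ∨ u.2 ≠ v.2 := by
      by_contra! h
      exact huv (Prod.ext h.1 h.2)
    unfold adjZ2
    omega

noncomputable section Stair

variable (a b : ℤ × ℤ)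

-- With this many steps consecutive samples are at most `1/2` apart in each coordinate, so
-- their roundings differ by at most one in each coordinate.
def stairSteps : ℕ := 2 * ((b.1 - a.1).natAbs + (b.2 - a.2).natAbs) + 1

def stairSample (k : ℕ) : ℂ :=
  AffineMap.lineMap (toComplex a) (toComplex b) ((k : ℝ) / stairSteps a b)

def stairVertex (k : ℕ) : ℤ × ℤ :=
  (round (stairSample a b k).re, round (stairSample a b k).im)

-- Even steps visit the rounded samples; odd steps visit the corner between two of them.
def stairWalk (m : ℕ) : ℤ × ℤ :=
  ((stairVertex a b ((m + 1) / 2)).1, (stairVertex a b (m / 2)).2)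

def stair : Set (ℤ × ℤ) :=
  stairWalk a b '' Set.Iic (2 * stairSteps a b)

theorem stair_finite : (stair a b).Finite :=
  (Set.finite_Iic _).image _

theorem stairSteps_pos : (0 : ℝ) < stairSteps a b := by
  unfold stairSteps; positivity

theorem stairWalk_zero : stairWalk a b 0 = a := by
  simp [stairWalk, stairVertex, stairSample]

theorem stairWalk_two_mul_stairSteps : stairWalk a b (2 * stairSteps a b) = b := by
  have h1 : (2 * stairSteps a b + 1) / 2 = stairSteps a b := by omega
  have h2 : 2 * stairSteps a b / 2 = stairSteps a b := by omega
  simp [stairWalk, stairVertex, stairSample, h1, h2, div_self (stairSteps_pos a b).ne']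

theorem left_mem_stair : a ∈ stair a b :=
  ⟨0, Set.mem_Iic.2 (Nat.zero_le _), stairWalk_zero a b⟩

theorem right_mem_stair : b ∈ stair a b :=
  ⟨_, Set.mem_Iic.2 le_rfl, stairWalk_two_mul_stairSteps a b⟩

theorem stairSample_mem_segment {k : ℕ} (hk : k ≤ stairSteps a b) :
    stairSample a b k ∈ segment ℝ (toComplex a) (toComplex b) := by
  have ht : (k : ℝ) / stairSteps a b ∈ Set.Icc (0 : ℝ) 1 :=
    ⟨by positivity, (div_le_one (stairSteps_pos a b)).2 (by exact_mod_cast hk)⟩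
  exact lineMap_mem_segment ℝ _ _ ht

theorem norm_stairSample_succ_sub_le (k : ℕ) :
    ‖stairSample a b (k + 1) - stairSample a b k‖ ≤ 1 / 2 := by
  have hsub : stairSample a b (k + 1) - stairSample a b k
      = (1 / stairSteps a b : ℝ) • (toComplex b - toComplex a) := by
    simp only [stairSample, AffineMap.lineMap_apply_module']
    rw [add_sub_add_right_eq_sub, ← sub_smul]
    push_cast
    ring_nf
  have hnorm : ‖toComplex b - toComplex a‖ ≤ ((b.1 - a.1).natAbs + (b.2 - a.2).natAbs : ℕ) := by
    refine (Complex.norm_le_abs_re_add_abs_im _).trans_eq ?_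
    simp [Nat.cast_natAbs]
  rw [hsub, norm_smul, Real.norm_of_nonneg (by positivity), one_div_mul_eq_div,
    div_le_iff₀ (stairSteps_pos a b)]
  unfold stairSteps
  push_cast at hnorm ⊢
  linarith

theorem abs_re_stairSample_succ_sub_le (k : ℕ) :
    |(stairSample a b (k + 1)).re - (stairSample a b k).re| ≤ 1 / 2 := by
  rw [← Complex.sub_re]
  exact (Complex.abs_re_le_norm _).trans (norm_stairSample_succ_sub_le a b k)

theorem abs_im_stairSample_succ_sub_le (k : ℕ) :
    |(stairSample a b (k + 1)).im - (stairSample a b k).im| ≤ 1 / 2 := by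
  rw [← Complex.sub_im]
  exact (Complex.abs_im_le_norm _).trans (norm_stairSample_succ_sub_le a b k)

theorem natAbs_stairWalk_succ_sub_le (m : ℕ) :
    ((stairWalk a b (m + 1)).1 - (stairWalk a b m).1).natAbs
      + ((stairWalk a b (m + 1)).2 - (stairWalk a b m).2).natAbs ≤ 1 := by
  obtain ⟨k, rfl | rfl⟩ := Nat.even_or_odd' m
  · have hx := abs_round_sub_round_le_one
      ((abs_re_stairSample_succ_sub_le a b k).trans_lt (by norm_num))
    simp only [stairWalk, stairVertex, show (2 * k + 1 + 1) / 2 = k + 1 by omega,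
      show (2 * k + 1) / 2 = k by omega, show 2 * k / 2 = k by omega, sub_self]
    rw [abs_le] at hx
    omega
  · have hy := abs_round_sub_round_le_one
      ((abs_im_stairSample_succ_sub_le a b k).trans_lt (by norm_num))
    simp only [stairWalk, stairVertex, show (2 * k + 1 + 1 + 1) / 2 = k + 1 by omega,
      show (2 * k + 1 + 1) / 2 = k + 1 by omega, show (2 * k + 1) / 2 = k by omega, sub_self]
    rw [abs_le] at hy
    omega

theorem abs_stairWalk_fst_sub_le (m : ℕ) :
    |((stairWalk a b m).1 : ℝ) - (stairSample a b (m / 2)).re| ≤ 1 := by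
  have hround := abs_sub_round (stairSample a b ((m + 1) / 2)).re
  have hstep : |(stairSample a b ((m + 1) / 2)).re - (stairSample a b (m / 2)).re| ≤ 1 / 2 := by
    rcases (by omega : (m + 1) / 2 = m / 2 ∨ (m + 1) / 2 = m / 2 + 1) with h | h <;> rw [h]
    · simp
    · exact abs_re_stairSample_succ_sub_le a b _
  rw [abs_sub_comm] at hround
  calc _ ≤ |(round (stairSample a b ((m + 1) / 2)).re : ℝ) - (stairSample a b ((m + 1) / 2)).re|
        + |(stairSample a b ((m + 1) / 2)).re - (stairSample a b (m / 2)).re| :=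
      abs_sub_le _ _ _
    _ ≤ 1 := by linarith

theorem abs_stairWalk_snd_sub_le (m : ℕ) :
    |((stairWalk a b m).2 : ℝ) - (stairSample a b (m / 2)).im| ≤ 1 / 2 := by
  rw [abs_sub_comm]
  exact abs_sub_round _

theorem exists_mem_segment_dist_le_of_mem_stair {p : ℤ × ℤ} (hp : p ∈ stair a b) :
    ∃ z ∈ segment ℝ (toComplex a) (toComplex b), dist (toComplex p) z ≤ 9 / 8 := by
  obtain ⟨m, hm, rfl⟩ := hp
  refine ⟨_, stairSample_mem_segment a b (k := m / 2) (by grind), ?_⟩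
  have hx := abs_stairWalk_fst_sub_le a b m
  have hy := abs_stairWalk_snd_sub_le a b m
  rw [abs_le] at hx hy
  rw [Complex.dist_eq_re_im, Real.sqrt_le_left (by norm_num), toComplex_re, toComplex_im]
  nlinarith

theorem connIn_stair : ConnIn (stair a b) := by
  have from_left : ∀ m ≤ 2 * stairSteps a b, ReachIn (stair a b) a (stairWalk a b m) := by
    intro m
    induction m with
    | zero =>
      intro _
      rw [stairWalk_zero]
      exact Relation.ReflTransGen.refl
    | succ m ih =>
      intro hm
      refine (ih (by omega)).trans (reachIn_of_natAbs_add_natAbs_le_one ⟨m, ?_, rfl⟩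
        ⟨m + 1, hm, rfl⟩ (natAbs_stairWalk_succ_sub_le a b m))
      exact Set.mem_Iic.2 (by omega)
  rintro _ ⟨m, hm, rfl⟩ _ ⟨n, hn, rfl⟩
  exact (from_left m hm).symm.trans (from_left n hn)

end Stair

theorem lt_edistZ2_of_mem_stair {g : ℝ} (hg : 2 ≤ g) {a b c d p q : ℤ × ℤ}
    (hab : edistZ2 a b ≤ g) (hcd : edistZ2 c d ≤ g)
    (hac : g ≤ edistZ2 a c) (had : g ≤ edistZ2 a d)
    (hbc : g ≤ edistZ2 b c) (hbd : g ≤ edistZ2 b d)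
    (hp : p ∈ stair a b) (hq : q ∈ stair c d) :
    g / 2 - 2 < edistZ2 p q := by
  simp only [edistZ2_eq_dist] at *
  obtain ⟨z, hz, hpz⟩ := exists_mem_segment_dist_le_of_mem_stair a b hp
  obtain ⟨w, hw, hqw⟩ := exists_mem_segment_dist_le_of_mem_stair c d hq
  -- The segments are `g / √2` apart and `g / √2 - 2 * (9 / 8) > g / 2 - 2` once `g ≥ 2`.
  have hzw : g / 2 + 1 / 4 < dist z w := by
    refine lt_of_pow_lt_pow_left₀ 2 dist_nonneg ?_
    nlinarith [half_sq_le_dist_sq_of_mem_segment hab hcd hac had hbc hbd hz hw]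
  linarith [dist_triangle4 z (toComplex p) (toComplex q) w, dist_comm z (toComplex p)]

def fatten (W : Set (ℤ × ℤ)) (g : ℝ) : Set (ℤ × ℤ) :=
  {p | ∃ x ∈ W, ∃ y ∈ W, edistZ2 x y ≤ g ∧ p ∈ stair x y}

section Fatten

variable {W : Set (ℤ × ℤ)} {g : ℝ}

theorem mem_fatten {p : ℤ × ℤ} :
    p ∈ fatten W g ↔ ∃ x ∈ W, ∃ y ∈ W, edistZ2 x y ≤ g ∧ p ∈ stair x y :=
  Iff.rfl

theorem subset_fatten (hg : 0 ≤ g) : W ⊆ fatten W g :=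
  fun x hx => mem_fatten.2 ⟨x, hx, x, hx, by rwa [edistZ2_eq_dist, dist_self], left_mem_stair x x⟩

theorem fatten_finite (hW : W.Finite) : (fatten W g).Finite := by
  refine ((hW.prod hW).biUnion fun x _ => stair_finite x.1 x.2).subset ?_
  rintro p ⟨x, hx, y, hy, -, hp⟩
  exact Set.mem_biUnion (Set.mk_mem_prod hx hy) hp

theorem reachIn_fatten_of_mem_stair {x y p q : ℤ × ℤ} (hx : x ∈ W) (hy : y ∈ W)
    (hxy : edistZ2 x y ≤ g) (hp : p ∈ stair x y) (hq : q ∈ stair x y) :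
    ReachIn (fatten W g) p q :=
  (connIn_stair x y p hp q hq).mono fun _ hr => mem_fatten.2 ⟨x, hx, y, hy, hxy, hr⟩

theorem componentsSeparated_fatten (hg : 2 ≤ g) :
    ComponentsSeparated (fatten W g) (g / 2 - 2) := by
  rintro p ⟨a, ha, b, hb, hab, hp⟩ q ⟨c, hc, d, hd, hcd, hq⟩ hpq
  have far : ∀ x ∈ W, x ∈ stair a b → ∀ y ∈ W, y ∈ stair c d → g ≤ edistZ2 x y :=
    fun x hxW hx y hyW hy => le_of_not_ge fun hxy => hpq <|
      (reachIn_fatten_of_mem_stair ha hb hab hp hx).trans <|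
        (reachIn_fatten_of_mem_stair hxW hyW hxy (left_mem_stair x y) (right_mem_stair x y)).trans
          (reachIn_fatten_of_mem_stair hc hd hcd hy hq)
  exact (lt_edistZ2_of_mem_stair hg hab hcd
    (far a ha (left_mem_stair a b) c hc (left_mem_stair c d))
    (far a ha (left_mem_stair a b) d hd (right_mem_stair c d))
    (far b hb (right_mem_stair a b) c hc (left_mem_stair c d))
    (far b hb (right_mem_stair a b) d hd (right_mem_stair c d)) hp hq).le

theorem lt_edistZ2_of_mem_fatten (hg : 2 ≤ g) {V : Set (ℤ × ℤ)}
    (hWV : ∀ u ∈ W, ∀ v ∈ V, g < edistZ2 u v) {p q : ℤ × ℤ}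
    (hp : p ∈ fatten W g) (hq : q ∈ fatten V g) : g / 2 - 2 < edistZ2 p q := by
  obtain ⟨a, ha, b, hb, hab, hp⟩ := hp
  obtain ⟨c, hc, d, hd, hcd, hq⟩ := hq
  exact lt_edistZ2_of_mem_stair hg hab hcd (hWV a ha c hc).le (hWV a ha d hd).le
    (hWV b hb c hc).le (hWV b hb d hd).le hp hq

end Fatten

theorem AdmitsGluing.mono {A : Type*} {X : Set (ℤ × ℤ → A)} {E F E' F' : Set (ℤ × ℤ)}
    (h : AdmitsGluing X E' F') (hE : E ⊆ E') (hF : F ⊆ F') : AdmitsGluing X E F := by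
  intro x hx y hy
  obtain ⟨z, hz, hzx, hzy⟩ := h x hx y hy
  exact ⟨z, hz, fun u hu => hzx u (hE hu), fun u hu => hzy u (hF hu)⟩

theorem gluing_finite_of_gluing_separated_components_general
    {A : Type*}
    (X : Set (ℤ × ℤ → A)) (g : ℝ) (hg : 8 ≤ g)
    (hyp : ∀ E F : Set (ℤ × ℤ), E.Finite → F.Finite →
      (∀ u ∈ E, ∀ v ∈ F, edistZ2 u v > g / 2 - 2) →
      ComponentsSeparated E (g / 2 - 2) →
      ComponentsSeparated F (g / 2 - 2) →
      AdmitsGluing X E F) :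
    ∀ E F : Set (ℤ × ℤ), E.Finite → F.Finite →
      (∀ u ∈ E, ∀ v ∈ F, edistZ2 u v > g) → AdmitsGluing X E F := by
  intro E F hE hF hEF
  have hg2 : 2 ≤ g := by linarith
  exact (hyp (fatten E g) (fatten F g) (fatten_finite hE) (fatten_finite hF)
      (fun _ hp _ hq => lt_edistZ2_of_mem_fatten hg2 hEF hp hq)
      (componentsSeparated_fatten hg2) (componentsSeparated_fatten hg2)).mono
    (subset_fatten (by linarith)) (subset_fatten (by linarith))

/-- Reduction (B) ⇐ (C): if a subshift `X ⊆ A^{ℤ²}` admits gluing along every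
pair of finite sets `(E,F)` with `d(E,F) > g/2 − 2` whose connected components
(in each of `E` and `F` separately) are pairwise `(g/2 − 2)`-separated, then
`X` admits gluing along every pair of finite sets at distance `> g`. -/
theorem gluing_finite_of_gluing_separated_components
    {A : Type*} [Fintype A] [Nonempty A]
    (X : Set (ℤ × ℤ → A)) (g : ℝ) (hg : 8 ≤ g)
    (hne : X.Nonempty)
    (hclosed : @IsClosed _ (fullShiftTopZ2 A) X)
    (hinv : ∀ v : ℤ × ℤ, ∀ x ∈ X, shiftZ2 v x ∈ X)
    (hyp : ∀ E F : Set (ℤ × ℤ), E.Finite → F.Finite →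
      (∀ u ∈ E, ∀ v ∈ F, edistZ2 u v > g / 2 - 2) →
      ComponentsSeparated E (g / 2 - 2) →
      ComponentsSeparated F (g / 2 - 2) →
      AdmitsGluing X E F) :
    ∀ E F : Set (ℤ × ℤ), E.Finite → F.Finite →
      (∀ u ∈ E, ∀ v ∈ F, edistZ2 u v > g) → AdmitsGluing X E F :=
  gluing_finite_of_gluing_separated_components_general X g hg hyp
end

section
/- Let A be a nonempty finite alphabet, and let X ⊆ A^{ℤ²} be a subshift that is strongly irreducible with gap g ≥ 0. For an integer k ≥ 1, define Y_k ⊆ (A^{Fin k})^{ℤ} as the set of all y such that there exists x ∈ X with y(i)(j) = x(i,j) for all i ∈ ℤ and 0 ≤ j < k. Then Y_k is a nonempty closed shift-invariant subset of (A^{Fin k})^{ℤ} (with shift (σ_m y)(i) = y(i+m)), and Y_k is strongly irreducible with gap g as a ℤ-subshift: for all subsets E, F ⊆ ℤ with |e − f| > g for all e ∈ E, f ∈ F, and all y, y' ∈ Y_k, there exists z ∈ Y_k with z|_E = y|_E and z|_F = y'|_F. -/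
/-- The shift `ℤ`-action on a one-dimensional full shift. -/
def shiftZ {B : Type*} (m : ℤ) (y : ℤ → B) : ℤ → B := fun i => y (i + m)

/-- The product topology on a one-dimensional full shift with finite alphabet. -/
def fullShiftTopZ (B : Type*) : TopologicalSpace (ℤ → B) :=
  @Pi.topologicalSpace ℤ (fun _ => B) (fun _ => ⊥)

/-- The horizontal strip subshift `Y_k ⊆ (A^{Fin k})^ℤ` of a `ℤ²`-subshift `X`:
restrictions of configurations of `X` to `ℤ × {0, …, k−1}`. -/
def stripSubshift {A : Type*} (X : Set (ℤ × ℤ → A)) (k : ℕ) :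
    Set (ℤ → Fin k → A) :=
  {y | ∃ x ∈ X, ∀ (i : ℤ) (j : Fin k), y i j = x (i, (j : ℤ))}

/-- If `X ⊆ A^{ℤ²}` is a subshift that is strongly irreducible with gap
`g ≥ 0`, then for every `k ≥ 1` the strip subshift `Y_k ⊆ (A^{Fin k})^ℤ` is a
nonempty closed shift-invariant set which is strongly irreducible with gap `g`
as a `ℤ`-subshift. -/
theorem strip_of_SI_is_SI {A : Type*} [Fintype A] [Nonempty A]
    (X : Set (ℤ × ℤ → A)) (g : ℝ) (hg : 0 ≤ g)
    (hne : X.Nonempty)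
    (hclosed : @IsClosed _ (fullShiftTopZ2 A) X)
    (hinv : ∀ v : ℤ × ℤ, ∀ x ∈ X, shiftZ2 v x ∈ X)
    (hSI : ∀ E F : Set (ℤ × ℤ),
      (∀ u ∈ E, ∀ v ∈ F, edistZ2 u v > g) →
      ∀ x ∈ X, ∀ y ∈ X,
        ∃ z ∈ X, (∀ u ∈ E, z u = x u) ∧ (∀ u ∈ F, z u = y u))
    (k : ℕ) (hk : 1 ≤ k) :
    (stripSubshift X k).Nonempty ∧
    @IsClosed _ (fullShiftTopZ (Fin k → A)) (stripSubshift X k) ∧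
    (∀ m : ℤ, ∀ y ∈ stripSubshift X k, shiftZ m y ∈ stripSubshift X k) ∧
    (∀ E F : Set ℤ,
      (∀ e ∈ E, ∀ f ∈ F, |((e - f : ℤ) : ℝ)| > g) →
      ∀ y ∈ stripSubshift X k, ∀ y' ∈ stripSubshift X k,
        ∃ z ∈ stripSubshift X k,
          (∀ i ∈ E, z i = y i) ∧ (∀ i ∈ F, z i = y' i)) := by
  classical
  -- the restriction map
  set φ : (ℤ × ℤ → A) → (ℤ → Fin k → A) :=
    fun x i j => x (i, (j : ℤ)) with hφ
  have himg : stripSubshift X k = φ '' X := by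
    ext y
    constructor
    · rintro ⟨x, hx, h⟩
      exact ⟨x, hx, by funext i j; exact (h i j).symm⟩
    · rintro ⟨x, hx, rfl⟩
      exact ⟨x, hx, fun i j => rfl⟩
  refine ⟨?_, ?_, ?_, ?_⟩
  · obtain ⟨x, hx⟩ := hne
    exact ⟨φ x, x, hx, fun i j => rfl⟩
  · -- closedness
    letI : TopologicalSpace A := ⊥
    haveI : DiscreteTopology A := ⟨rfl⟩
    have hT2 : fullShiftTopZ2 A = (inferInstance : TopologicalSpace (ℤ × ℤ → A)) := rfl
    have hT : fullShiftTopZ (Fin k → A) =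
        (inferInstance : TopologicalSpace (ℤ → Fin k → A)) := by
      unfold fullShiftTopZ
      congr 1
      funext _
      exact (DiscreteTopology.eq_bot (α := Fin k → A)).symm
    rw [hT, himg]
    have hc : Continuous φ :=
      continuous_pi fun i => continuous_pi fun j => continuous_apply (i, (j : ℤ))
    have hXc : IsCompact X := (hT2 ▸ hclosed).isCompact
    exact (hXc.image hc).isClosed
  · rintro m y ⟨x, hx, h⟩
    refine ⟨shiftZ2 (m, 0) x, hinv _ _ hx, fun i j => ?_⟩
    have : ((i : ℤ), (j : ℤ)) + (m, 0) = (i + m, (j : ℤ)) := by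
      simp [Prod.ext_iff]
    simp [shiftZ, shiftZ2, h (i + m) j, this]
  · rintro E F hEF y ⟨x, hx, h⟩ y' ⟨x', hx', h'⟩
    set E' : Set (ℤ × ℤ) := {u | u.1 ∈ E}
    set F' : Set (ℤ × ℤ) := {u | u.1 ∈ F}
    have hdist : ∀ u ∈ E', ∀ v ∈ F', edistZ2 u v > g := by
      intro u hu v hv
      have h1 : |((u.1 - v.1 : ℤ) : ℝ)| ≤ edistZ2 u v := by
        unfold edistZ2
        rw [← Real.sqrt_sq_eq_abs]
        refine Real.sqrt_le_sqrt ?_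
        nlinarith [sq_nonneg (((u.2 - v.2 : ℤ) : ℝ))]
      exact lt_of_lt_of_le (hEF u.1 hu v.1 hv) h1
    obtain ⟨z, hz, hzE, hzF⟩ := hSI E' F' hdist x hx x' hx'
    refine ⟨φ z, ⟨z, hz, fun i j => rfl⟩, ?_, ?_⟩
    · intro i hi
      funext j
      exact (hzE (i, (j : ℤ)) hi).trans (h i j).symm
    · intro i hi
      funext j
      exact (hzF (i, (j : ℤ)) hi).trans (h' i j).symm
end

section
/- Let d > 2 be an integer, let A be a nonempty finite alphabet, and let X ⊆ A^{ℤ²} be a subshift that is strongly irreducible with gap g ≥ 0 and contains no periodic point. Define Y ⊆ A^{ℤ^d} as the set of all y such that for every v ∈ ℤ^{d−2}, the configuration (i,j) ↦ y(i,j,v) belongs to X. Then Y is a nonempty closed shift-invariant subset of A^{ℤ^d}, Y is strongly irreducible with gap g (with respect to Euclidean distance on ℤ^d), and Y contains no periodic point (no y ∈ Y has a finite orbit under the shift ℤ^d-action). -/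
/-- `ℤ^d`, written as `ℤ² × ℤ^{d−2}`: sites are `(i, j, v)` with `(i,j) ∈ ℤ²`
and `v ∈ ℤ^{d−2}`. -/
abbrev Zd (d : ℕ) := ℤ × ℤ × (Fin (d - 2) → ℤ)

/-- Euclidean distance between two sites of `ℤ^d = ℤ² × ℤ^{d−2}`. -/
noncomputable def edistZd {d : ℕ} (u v : Zd d) : ℝ :=
  Real.sqrt (((u.1 - v.1 : ℤ) : ℝ) ^ 2 + ((u.2.1 - v.2.1 : ℤ) : ℝ) ^ 2 +
    ∑ i, ((u.2.2 i - v.2.2 i : ℤ) : ℝ) ^ 2)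

/-- The shift `ℤ^d`-action on the full shift `A^{ℤ^d}`. -/
def shiftZd {d : ℕ} {A : Type*} (v : Zd d) (x : Zd d → A) : Zd d → A :=
  fun u => x (u + v)

/-- The product topology on the full shift `A^{ℤ^d}`, with `A` discrete. -/
def fullShiftTopZd (d : ℕ) (A : Type*) : TopologicalSpace (Zd d → A) :=
  @Pi.topologicalSpace (Zd d) (fun _ => A) (fun _ => ⊥)

/-- The set of configurations on `ℤ^d` all of whose two-dimensional slices
`(i,j) ↦ y (i,j,v)` belong to `X`. -/
def sliceLift {d : ℕ} {A : Type*} (X : Set (ℤ × ℤ → A)) : Set (Zd d → A) :=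
  {y | ∀ v : Fin (d - 2) → ℤ, (fun p : ℤ × ℤ => y (p.1, p.2, v)) ∈ X}

/-!
Every property passes slice by slice. A slice of a shifted configuration is a shifted slice;
sites in a common slice are as far apart in `ℤ^d` as in `ℤ²`, so gluing is done independently
in each slice; a periodic configuration on `ℤ^d` would have a periodic slice, since the shifts
in the first two coordinates act on the slice `v = 0` through its `ℤ²`-shifts.
-/

namespace SliceLift

variable {d : ℕ} {A : Type*}

def slice (v : Fin (d - 2) → ℤ) (y : Zd d → A) : ℤ × ℤ → A :=
  fun p => y (p.1, p.2, v)

theorem mem_sliceLift {X : Set (ℤ × ℤ → A)} {y : Zd d → A} :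
    y ∈ sliceLift X ↔ ∀ v, slice v y ∈ X :=
  Iff.rfl

theorem slice_shiftZd (v : Fin (d - 2) → ℤ) (w : Zd d) (y : Zd d → A) :
    slice v (shiftZd w y) = shiftZ2 (w.1, w.2.1) (slice (v + w.2.2) y) :=
  rfl

theorem edistZd_same_slice (v : Fin (d - 2) → ℤ) (u w : ℤ × ℤ) :
    edistZd ((u.1, u.2, v) : Zd d) (w.1, w.2, v) = edistZ2 u w := by
  simp [edistZd, edistZ2]

theorem sliceLift_nonempty {X : Set (ℤ × ℤ → A)} (hX : X.Nonempty) :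
    (sliceLift (d := d) X).Nonempty := by
  obtain ⟨x, hx⟩ := hX
  exact ⟨fun u => x (u.1, u.2.1), fun _ => hx⟩

theorem isClosed_sliceLift {X : Set (ℤ × ℤ → A)} (hX : @IsClosed _ (fullShiftTopZ2 A) X) :
    @IsClosed _ (fullShiftTopZd d A) (sliceLift X) := by
  let _ : TopologicalSpace A := ⊥
  have hslices : sliceLift (d := d) X = ⋂ v, slice v ⁻¹' X := by
    ext y
    simp only [mem_sliceLift, Set.mem_iInter, Set.mem_preimage]
  change IsClosed (sliceLift (d := d) X)
  rw [hslices]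
  exact isClosed_iInter fun v => hX.preimage (continuous_pi fun p => continuous_apply _)

theorem shiftZd_mem_sliceLift {X : Set (ℤ × ℤ → A)}
    (hX : ∀ v : ℤ × ℤ, ∀ x ∈ X, shiftZ2 v x ∈ X) (w : Zd d) {y : Zd d → A}
    (hy : y ∈ sliceLift X) : shiftZd w y ∈ sliceLift X := fun v =>
  show slice v (shiftZd w y) ∈ X from slice_shiftZd v w y ▸ hX _ _ (hy _)

theorem sliceLift_gluing {X : Set (ℤ × ℤ → A)} {g : ℝ}
    (hX : ∀ E F : Set (ℤ × ℤ), (∀ u ∈ E, ∀ v ∈ F, edistZ2 u v > g) →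
      ∀ x ∈ X, ∀ y ∈ X, ∃ z ∈ X, (∀ u ∈ E, z u = x u) ∧ (∀ u ∈ F, z u = y u))
    {E F : Set (Zd d)} (hEF : ∀ u ∈ E, ∀ v ∈ F, edistZd u v > g)
    {y y' : Zd d → A} (hy : y ∈ sliceLift X) (hy' : y' ∈ sliceLift X) :
    ∃ z ∈ sliceLift X, (∀ u ∈ E, z u = y u) ∧ (∀ u ∈ F, z u = y' u) := by
  have hslice : ∀ v : Fin (d - 2) → ℤ, ∃ z ∈ X,
      (∀ p : ℤ × ℤ, (p.1, p.2, v) ∈ E → z p = slice v y p) ∧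
      (∀ p : ℤ × ℤ, (p.1, p.2, v) ∈ F → z p = slice v y' p) := fun v =>
    hX {p | (p.1, p.2, v) ∈ E} {p | (p.1, p.2, v) ∈ F}
      (fun p hp q hq => edistZd_same_slice v p q ▸ hEF _ hp _ hq) _ (hy v) _ (hy' v)
  choose z hzX hzE hzF using hslice
  exact ⟨fun u => z u.2.2 (u.1, u.2.1), hzX,
    fun ⟨a, b, c⟩ hu => hzE c (a, b) hu, fun ⟨a, b, c⟩ hu => hzF c (a, b) hu⟩

theorem not_finite_orbit_of_mem_sliceLift {X : Set (ℤ × ℤ → A)}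
    (hX : ∀ x ∈ X, ¬ (Set.range fun v : ℤ × ℤ => shiftZ2 v x).Finite)
    {y : Zd d → A} (hy : y ∈ sliceLift X) :
    ¬ (Set.range fun w : Zd d => shiftZd w y).Finite := fun hfin => by
  refine hX _ (hy 0) ((hfin.image (slice 0)).subset ?_)
  rintro _ ⟨w, rfl⟩
  refine ⟨shiftZd (w.1, w.2, 0) y, ⟨_, rfl⟩, ?_⟩
  change slice 0 (shiftZd (w.1, w.2, 0) y) = shiftZ2 w (slice 0 y)
  rw [slice_shiftZd, zero_add]

end SliceLift

open SliceLift in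
theorem sliceLift_SI_aperiodic_general {A : Type*}
    (d : ℕ)
    (X : Set (ℤ × ℤ → A)) (g : ℝ)
    (hne : X.Nonempty)
    (hclosed : @IsClosed _ (fullShiftTopZ2 A) X)
    (hinv : ∀ v : ℤ × ℤ, ∀ x ∈ X, shiftZ2 v x ∈ X)
    (hSI : ∀ E F : Set (ℤ × ℤ),
      (∀ u ∈ E, ∀ v ∈ F, edistZ2 u v > g) →
      ∀ x ∈ X, ∀ y ∈ X,
        ∃ z ∈ X, (∀ u ∈ E, z u = x u) ∧ (∀ u ∈ F, z u = y u))
    (haper : ∀ x ∈ X, ¬ (Set.range fun v : ℤ × ℤ => shiftZ2 v x).Finite) :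
    (sliceLift (d := d) X).Nonempty ∧
    @IsClosed _ (fullShiftTopZd d A) (sliceLift (d := d) X) ∧
    (∀ v : Zd d, ∀ y ∈ sliceLift (d := d) X, shiftZd v y ∈ sliceLift (d := d) X) ∧
    (∀ E F : Set (Zd d),
      (∀ u ∈ E, ∀ v ∈ F, edistZd u v > g) →
      ∀ y ∈ sliceLift (d := d) X, ∀ y' ∈ sliceLift (d := d) X,
        ∃ z ∈ sliceLift (d := d) X,
          (∀ u ∈ E, z u = y u) ∧ (∀ u ∈ F, z u = y' u)) ∧
    (∀ y ∈ sliceLift (d := d) X,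
      ¬ (Set.range fun v : Zd d => shiftZd v y).Finite) :=
  ⟨sliceLift_nonempty hne, isClosed_sliceLift hclosed,
    fun w _ hy => shiftZd_mem_sliceLift hinv w hy,
    fun _ _ hEF _ hy _ hy' => sliceLift_gluing hSI hEF hy hy',
    fun _ hy => not_finite_orbit_of_mem_sliceLift haper hy⟩

/-- If `X ⊆ A^{ℤ²}` is a subshift that is strongly irreducible with gap `g ≥ 0`
and has no periodic point, then for `d > 2` the set `Y ⊆ A^{ℤ^d}` of
configurations all of whose `ℤ²`-slices lie in `X` is a nonempty closed
shift-invariant set, strongly irreducible with gap `g`, with no periodic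
point. -/
theorem sliceLift_SI_aperiodic {A : Type*} [Fintype A] [Nonempty A]
    (d : ℕ) (hd : 2 < d)
    (X : Set (ℤ × ℤ → A)) (g : ℝ) (hg : 0 ≤ g)
    (hne : X.Nonempty)
    (hclosed : @IsClosed _ (fullShiftTopZ2 A) X)
    (hinv : ∀ v : ℤ × ℤ, ∀ x ∈ X, shiftZ2 v x ∈ X)
    (hSI : ∀ E F : Set (ℤ × ℤ),
      (∀ u ∈ E, ∀ v ∈ F, edistZ2 u v > g) →
      ∀ x ∈ X, ∀ y ∈ X,
        ∃ z ∈ X, (∀ u ∈ E, z u = x u) ∧ (∀ u ∈ F, z u = y u))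
    (haper : ∀ x ∈ X, ¬ (Set.range fun v : ℤ × ℤ => shiftZ2 v x).Finite) :
    (sliceLift (d := d) X).Nonempty ∧
    @IsClosed _ (fullShiftTopZd d A) (sliceLift (d := d) X) ∧
    (∀ v : Zd d, ∀ y ∈ sliceLift (d := d) X, shiftZd v y ∈ sliceLift (d := d) X) ∧
    (∀ E F : Set (Zd d),
      (∀ u ∈ E, ∀ v ∈ F, edistZd u v > g) →
      ∀ y ∈ sliceLift (d := d) X, ∀ y' ∈ sliceLift (d := d) X,
        ∃ z ∈ sliceLift (d := d) X,
          (∀ u ∈ E, z u = y u) ∧ (∀ u ∈ F, z u = y' u)) ∧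
    (∀ y ∈ sliceLift (d := d) X,
      ¬ (Set.range fun v : Zd d => shiftZd v y).Finite) :=
  sliceLift_SI_aperiodic_general d X g hne hclosed hinv hSI haper
end
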